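/- arXiv:math/0401050 — 3 statements merged into one kernel-verified Lean document; each statement's English description precedes it below -/
import Mathlib

section
/- Let G be a group generated by elements a_1,…,a_m (m ≥ 2) which is δ-hyperbolic. Let ℓ and a be integers with 0 ≤ a ≤ ℓ, and let x ∈ B_ℓ. Then the number of elements y ∈ B_ℓ such that the Gromov product satisfies (x,y) ≥ a is at most |B_{ℓ−a+2δ}|. -/
open Filter Set

namespace GrowthRQ

variable {G : Type*} [Group G] {m : ℕ}

/-- Word norm with respect to the generators `gen i` and their inverses. -/
noncomputable def wordNorm (gen : Fin m → G) (x : G) : ℕ :=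
  sInf {n | ∃ w : List (Fin m × Bool), w.length = n ∧
    (w.map (fun p => if p.2 then gen p.1 else (gen p.1)⁻¹)).prod = x}

/-- Ball of (real) radius `r` for the word norm. -/
def ball (gen : Fin m → G) (r : ℝ) : Set G := {x | (wordNorm gen x : ℝ) ≤ r}

/-- Annulus of elements of norm in `(ℓ - a, ℓ]`. -/
def ann (gen : Fin m → G) (ℓ a : ℝ) : Set G := ball gen ℓ \ ball gen (ℓ - a)

/-- Growth exponent in base `2m-1`. (The limit exists by submultiplicativity,
so it equals the `limsup`.) -/
noncomputable def growthExponent (gen : Fin m → G) : ℝ :=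
  Filter.limsup (fun L : ℕ => Real.logb (2 * (m : ℝ) - 1) ((ball gen L).ncard) / L) Filter.atTop

/-- Gromov product with origin `e`. -/
noncomputable def gromov (gen : Fin m → G) (x y : G) : ℝ :=
  ((wordNorm gen x : ℝ) + (wordNorm gen y : ℝ) - (wordNorm gen (x⁻¹ * y) : ℝ)) / 2

/-- `δ`-hyperbolicity via the Gromov product. -/
def IsHyperbolic (gen : Fin m → G) (δ : ℝ) : Prop :=
  ∀ x y z : G, gromov gen x z ≥ min (gromov gen x y) (gromov gen y z) - δ

/-- Non-elementary: not virtually cyclic. -/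
def NonElementary (G : Type*) [Group G] : Prop :=
  ¬ ∃ H : Subgroup G, H.index ≠ 0 ∧ IsCyclic H

/-- Probability, for `N` independent uniform choices of relators in the ball of radius `ℓ`,
that the chosen tuple satisfies `P`. -/
noncomputable def quotProb (gen : Fin m → G) (ℓ N : ℕ) (P : (Fin N → G) → Prop) : ℝ :=
  (({r : Fin N → G | (∀ i, r i ∈ ball gen (ℓ : ℝ)) ∧ P r}).ncard : ℝ) /
  (({r : Fin N → G | ∀ i, r i ∈ ball gen (ℓ : ℝ)}).ncard : ℝ)

/-- Images of the generators in the quotient by the normal closure of the relators. -/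
noncomputable def quotGen (gen : Fin m → G) {N : ℕ} (r : Fin N → G) :
    Fin m → G ⧸ Subgroup.normalClosure (Set.range r) :=
  fun i => QuotientGroup.mk (gen i)


/-!
Let `u` be the point at distance `a` from `e` on a geodesic from `e` to `x`, so that `|u| = a`
and `(u, x) = a`. If `(x, y) ≥ a`, hyperbolicity gives `(u, y) ≥ a - δ`, i.e.
`|u⁻¹y| ≤ |y| - a + 2δ ≤ ℓ - a + 2δ`; so left translation by `u⁻¹` injects the set of such
`y ∈ B_ℓ` into `B_{ℓ-a+2δ}`. If `|x| < a` there is no such `y`, since `(x, y) ≤ |x|`.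
-/

section WordNorm

variable (gen : Fin m → G)

def evalWord (w : List (Fin m × Bool)) : G :=
  (w.map (fun p => if p.2 then gen p.1 else (gen p.1)⁻¹)).prod

@[simp]
lemma evalWord_append (w₁ w₂ : List (Fin m × Bool)) :
    evalWord gen (w₁ ++ w₂) = evalWord gen w₁ * evalWord gen w₂ := by
  simp [evalWord]

lemma exists_evalWord_eq (hgen : Subgroup.closure (Set.range gen) = ⊤) (x : G) :
    ∃ w, evalWord gen w = x := by
  have hx : x ∈ Subgroup.closure (Set.range gen) := hgen ▸ Subgroup.mem_top x
  induction hx using Subgroup.closure_induction'' with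
  | mem _ h => obtain ⟨i, rfl⟩ := h; exact ⟨[(i, true)], by simp [evalWord]⟩
  | inv_mem _ h => obtain ⟨i, rfl⟩ := h; exact ⟨[(i, false)], by simp [evalWord]⟩
  | one => exact ⟨[], rfl⟩
  | mul _ _ _ _ h₁ h₂ =>
    obtain ⟨w₁, rfl⟩ := h₁
    obtain ⟨w₂, rfl⟩ := h₂
    exact ⟨w₁ ++ w₂, evalWord_append gen w₁ w₂⟩

lemma wordNorm_le_length {x : G} {w : List (Fin m × Bool)} (h : evalWord gen w = x) :
    wordNorm gen x ≤ w.length :=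
  Nat.sInf_le ⟨w, rfl, h⟩

lemma exists_length_eq_wordNorm (hgen : Subgroup.closure (Set.range gen) = ⊤) (x : G) :
    ∃ w, w.length = wordNorm gen x ∧ evalWord gen w = x := by
  obtain ⟨w, hw⟩ := exists_evalWord_eq gen hgen x
  exact Nat.sInf_mem (s := {n | ∃ w : List (Fin m × Bool), w.length = n ∧ evalWord gen w = x})
    ⟨w.length, w, rfl, hw⟩

variable {gen} (hgen : Subgroup.closure (Set.range gen) = ⊤)
include hgen

lemma wordNorm_mul_le (x y : G) : wordNorm gen (x * y) ≤ wordNorm gen x + wordNorm gen y := by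
  obtain ⟨w₁, hl₁, rfl⟩ := exists_length_eq_wordNorm gen hgen x
  obtain ⟨w₂, hl₂, rfl⟩ := exists_length_eq_wordNorm gen hgen y
  simpa [hl₁, hl₂] using wordNorm_le_length gen (evalWord_append gen w₁ w₂)

lemma ball_finite (r : ℝ) : (ball gen r).Finite := by
  refine ((List.finite_length_le _ ⌊r⌋₊).image (evalWord gen)).subset fun x hx => ?_
  obtain ⟨w, hlen, hw⟩ := exists_length_eq_wordNorm gen hgen x
  exact ⟨w, hlen.trans_le (Nat.le_floor (α := ℝ) hx), hw⟩

lemma gromov_le_wordNorm_left (x y : G) : gromov gen x y ≤ wordNorm gen x := by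
  have h : wordNorm gen y ≤ wordNorm gen x + wordNorm gen (x⁻¹ * y) := by
    simpa using wordNorm_mul_le hgen x (x⁻¹ * y)
  have h' : (wordNorm gen y : ℝ) ≤ wordNorm gen x + wordNorm gen (x⁻¹ * y) := by
    exact_mod_cast h
  unfold gromov
  linarith

lemma exists_wordNorm_eq_gromov_eq {x : G} {a : ℕ} (ha : a ≤ wordNorm gen x) :
    ∃ u, wordNorm gen u = a ∧ gromov gen u x = a := by
  obtain ⟨w, hlen, hw⟩ := exists_length_eq_wordNorm gen hgen x
  set u := evalWord gen (w.take a)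
  have hrest_eval : evalWord gen (w.drop a) = u⁻¹ * x := by
    rw [eq_inv_mul_iff_mul_eq, ← evalWord_append, List.take_append_drop, hw]
  have hu_le := wordNorm_le_length gen (x := u) rfl
  have hrest := wordNorm_le_length gen hrest_eval
  have htri := wordNorm_mul_le hgen u (u⁻¹ * x)
  rw [mul_inv_cancel_left] at htri
  simp only [List.length_take, List.length_drop] at hu_le hrest
  have hu_eq : wordNorm gen u = a := by omega
  have hrest_eq : (wordNorm gen (u⁻¹ * x) : ℝ) = wordNorm gen x - a := by
    rw [← Nat.cast_sub ha]; congr 1; omega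
  refine ⟨u, hu_eq, ?_⟩
  rw [gromov, hu_eq, hrest_eq]
  ring

end WordNorm

lemma wordNorm_inv_mul_le_of_le_gromov {gen : Fin m → G} {δ : ℝ} (hhyp : IsHyperbolic gen δ)
    {u x y : G} {a : ℝ} (hu : (wordNorm gen u : ℝ) = a) (hux : a ≤ gromov gen u x)
    (hxy : a ≤ gromov gen x y) :
    (wordNorm gen (u⁻¹ * y) : ℝ) ≤ wordNorm gen y - a + 2 * δ := by
  have huy : a - δ ≤ gromov gen u y := by linarith [hhyp u x y, le_min hux hxy]
  rw [gromov, hu] at huy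
  linarith

theorem statement7_general {G : Type*} [Group G] {m : ℕ} (gen : Fin m → G)
    (hgen : Subgroup.closure (Set.range gen) = ⊤)
    (δ : ℝ) (hhyp : IsHyperbolic gen δ)
    (ℓ a : ℕ) (x : G) :
    ({y ∈ ball gen (ℓ : ℝ) | (a : ℝ) ≤ gromov gen x y}).ncard ≤
      (ball gen ((ℓ : ℝ) - a + 2 * δ)).ncard := by
  by_cases hax : a ≤ wordNorm gen x
  · obtain ⟨u, hu, hux⟩ := exists_wordNorm_eq_gromov_eq hgen hax
    refine Set.ncard_le_ncard_of_injOn (u⁻¹ * ·) ?_ (mul_right_injective u⁻¹).injOn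
      (ball_finite hgen _)
    rintro y ⟨hy, hxy⟩
    have hy : (wordNorm gen y : ℝ) ≤ ℓ := hy
    show (wordNorm gen (u⁻¹ * y) : ℝ) ≤ ℓ - a + 2 * δ
    linarith [wordNorm_inv_mul_le_of_le_gromov hhyp (by exact_mod_cast hu) hux.ge hxy]
  · have hempty : {y ∈ ball gen (ℓ : ℝ) | (a : ℝ) ≤ gromov gen x y} = ∅ :=
      Set.eq_empty_of_forall_notMem fun y ⟨_, hxy⟩ =>
        hax (by exact_mod_cast hxy.trans (gromov_le_wordNorm_left hgen x y))
    simp [hempty]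

/-- in a `δ`-hyperbolic group, for `0 ≤ a ≤ ℓ` and `x ∈ B_ℓ`, the number of
`y ∈ B_ℓ` with Gromov product `(x,y) ≥ a` is at most `|B_{ℓ-a+2δ}|`. -/
theorem statement7 {G : Type*} [Group G] {m : ℕ} (hm : 2 ≤ m) (gen : Fin m → G)
    (hgen : Subgroup.closure (Set.range gen) = ⊤)
    (δ : ℝ) (hδ : 0 ≤ δ) (hhyp : IsHyperbolic gen δ)
    (ℓ a : ℕ) (ha : a ≤ ℓ) (x : G) (hx : x ∈ ball gen ℓ) :
    ({y ∈ ball gen (ℓ : ℝ) | (a : ℝ) ≤ gromov gen x y}).ncard ≤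
      (ball gen ((ℓ : ℝ) - a + 2 * δ)).ncard :=
  statement7_general gen hgen δ hhyp ℓ a x

end GrowthRQ
end

section
/- Let G be a group generated by elements a_1,…,a_m (m ≥ 2) which is δ-hyperbolic. Let ℓ and a be integers with 1 ≤ a ≤ ℓ, let g, g' ∈ S_{ℓ,a} be such that x := gg' ∈ S_{2ℓ,4a}, and let h ∈ G lie on a geodesic from e to x with ‖h‖ = ⌈‖x‖/2⌉ (that is, ‖h‖ + ‖h^{-1}x‖ = ‖x‖ and ‖h‖ = ⌈‖x‖/2⌉). Then ‖g^{-1}h‖ ≤ 6a + 2δ; in particular g lies in the ball of radius 6a+2δ around h, and g' = g^{-1}x is determined by g. -/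
open Filter Set

namespace GrowthRQ

variable {G : Type*} [Group G] {m : ℕ}

/-
Apply δ-hyperbolicity to the triple `g, x = g g', h`. Since `h` lies on a geodesic from `e` to
`x`, the Gromov product `(x, h)` equals `‖h‖`, so either `(g, h) ≥ ‖h‖ - δ` or
`(g, h) ≥ (g, x) - δ`. Unfolding, `‖g⁻¹ h‖` is at most `‖g‖ - ‖h‖ + 2δ` or
`‖g'‖ + ‖h‖ - ‖x‖ + 2δ`, and with `‖g‖, ‖g'‖ ≤ ℓ`, `‖x‖ > 2ℓ - 4a` and `‖h‖ ≈ ‖x‖/2` both are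
below `2a + 1 + 2δ`.
-/

def wordProd (gen : Fin m → G) (w : List (Fin m × Bool)) : G :=
  (w.map fun p => if p.2 then gen p.1 else (gen p.1)⁻¹).prod

section WordNorm

variable (gen : Fin m → G)

lemma wordNorm_eq_sInf (x : G) :
    wordNorm gen x = sInf {n | ∃ w, w.length = n ∧ wordProd gen w = x} :=
  rfl

lemma wordProd_reverse_flip (w : List (Fin m × Bool)) :
    wordProd gen (w.map fun p => (p.1, !p.2)).reverse = (wordProd gen w)⁻¹ := by
  induction w with
  | nil => simp [wordProd]
  | cons p w ih =>
    rcases p with ⟨i, _ | _⟩ <;> simp_all [wordProd]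

lemma exists_wordProd_eq_inv {n : ℕ} {x : G}
    (hx : ∃ w, w.length = n ∧ wordProd gen w = x) :
    ∃ w, w.length = n ∧ wordProd gen w = x⁻¹ := by
  obtain ⟨w, rfl, rfl⟩ := hx
  exact ⟨(w.map fun p => (p.1, !p.2)).reverse, by simp, wordProd_reverse_flip gen w⟩

lemma wordNorm_inv (x : G) : wordNorm gen x⁻¹ = wordNorm gen x := by
  rw [wordNorm_eq_sInf, wordNorm_eq_sInf]
  congr 1
  ext n
  exact ⟨fun hn => inv_inv x ▸ exists_wordProd_eq_inv gen hn, exists_wordProd_eq_inv gen⟩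

lemma wordNorm_inv_mul_comm (x y : G) : wordNorm gen (x⁻¹ * y) = wordNorm gen (y⁻¹ * x) := by
  rw [← wordNorm_inv, mul_inv_rev, inv_inv]

lemma gromov_eq_wordNorm_of_geodesic {x h : G}
    (hgeo : wordNorm gen h + wordNorm gen (h⁻¹ * x) = wordNorm gen x) :
    gromov gen x h = wordNorm gen h := by
  have hgeo' : (wordNorm gen h : ℝ) + wordNorm gen (x⁻¹ * h) = wordNorm gen x := by
    rw [wordNorm_inv_mul_comm]
    exact_mod_cast hgeo
  unfold gromov
  linarith

lemma IsHyperbolic.wordNorm_inv_mul_le_of_geodesic {δ : ℝ} (hhyp : IsHyperbolic gen δ)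
    (g : G) {x h : G} (hgeo : wordNorm gen h + wordNorm gen (h⁻¹ * x) = wordNorm gen x) :
    (wordNorm gen (g⁻¹ * h) : ℝ) ≤
      max ((wordNorm gen g : ℝ) - wordNorm gen h)
        ((wordNorm gen (g⁻¹ * x) : ℝ) + wordNorm gen h - wordNorm gen x) + 2 * δ := by
  have key := hhyp g x h
  rw [gromov_eq_wordNorm_of_geodesic gen hgeo] at key
  rw [← sub_le_iff_le_add, le_max_iff]
  rcases min_choice (gromov gen g x) (wordNorm gen h : ℝ) with hmin | hmin <;>
    rw [hmin] at key <;> unfold gromov at key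
  · right; linarith
  · left; linarith

end WordNorm

theorem statement10_general {G : Type*} [Group G] {m : ℕ} (gen : Fin m → G)
    (δ : ℝ) (hhyp : IsHyperbolic gen δ)
    (ℓ a : ℕ) (ha1 : 1 ≤ a)
    (g g' : G) (hg : g ∈ ann gen (ℓ : ℝ) (a : ℝ)) (hg' : g' ∈ ann gen (ℓ : ℝ) (a : ℝ))
    (hx : g * g' ∈ ann gen (2 * (ℓ : ℝ)) (4 * (a : ℝ)))
    (h : G)
    (hgeo : wordNorm gen h + wordNorm gen (h⁻¹ * (g * g')) = wordNorm gen (g * g'))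
    (hhalf : wordNorm gen h = ⌈(wordNorm gen (g * g') : ℝ) / 2⌉₊) :
    (wordNorm gen (g⁻¹ * h) : ℝ) ≤ 6 * a + 2 * δ ∧ g' = g⁻¹ * (g * g') := by
  refine ⟨?_, (inv_mul_cancel_left g g').symm⟩
  have hdist := hhyp.wordNorm_inv_mul_le_of_geodesic gen g hgeo
  rw [inv_mul_cancel_left] at hdist
  have hh_ge : (wordNorm gen (g * g') : ℝ) / 2 ≤ wordNorm gen h := by
    rw [hhalf]
    exact Nat.le_ceil _
  have hh_lt : (wordNorm gen h : ℝ) < wordNorm gen (g * g') / 2 + 1 := by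
    rw [hhalf]
    exact Nat.ceil_lt_add_one (by positivity)
  have hg_le : (wordNorm gen g : ℝ) ≤ ℓ := hg.1
  have hg'_le : (wordNorm gen g' : ℝ) ≤ ℓ := hg'.1
  have hx_gt : 2 * (ℓ : ℝ) - 4 * a < wordNorm gen (g * g') := not_le.mp hx.2
  have ha : (1 : ℝ) ≤ a := by exact_mod_cast ha1
  exact hdist.trans (by gcongr; exact max_le (by linarith) (by linarith))

/-- with `g, g' ∈ S_{ℓ,a}`, `x = g g' ∈ S_{2ℓ,4a}`, and `h` a point on a
geodesic from `e` to `x` with `‖h‖ = ⌈‖x‖/2⌉`, one has `‖g⁻¹ h‖ ≤ 6a + 2δ`; in particular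
`g` lies in the ball of radius `6a+2δ` around `h`, and `g' = g⁻¹ x` is determined by `g`. -/
theorem statement10 {G : Type*} [Group G] {m : ℕ} (hm : 2 ≤ m) (gen : Fin m → G)
    (hgen : Subgroup.closure (Set.range gen) = ⊤)
    (δ : ℝ) (hδ : 0 ≤ δ) (hhyp : IsHyperbolic gen δ)
    (ℓ a : ℕ) (ha1 : 1 ≤ a) (ha : a ≤ ℓ)
    (g g' : G) (hg : g ∈ ann gen (ℓ : ℝ) (a : ℝ)) (hg' : g' ∈ ann gen (ℓ : ℝ) (a : ℝ))
    (hx : g * g' ∈ ann gen (2 * (ℓ : ℝ)) (4 * (a : ℝ)))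
    (h : G)
    (hgeo : wordNorm gen h + wordNorm gen (h⁻¹ * (g * g')) = wordNorm gen (g * g'))
    (hhalf : wordNorm gen h = ⌈(wordNorm gen (g * g') : ℝ) / 2⌉₊) :
    (wordNorm gen (g⁻¹ * h) : ℝ) ≤ 6 * a + 2 * δ ∧ g' = g⁻¹ * (g * g') :=
  statement10_general gen δ hhyp ℓ a ha1 g g' hg hg' hx h hgeo hhalf

end GrowthRQ
end

section
/- Let G be a group generated by elements a_1,…,a_m (m ≥ 2). Suppose that for some real g > 0 and integers ℓ_0 ≥ 1 and ℓ_1 ≥ 100ℓ_0 one has |B_{ℓ_0}| ≤ (2m−1)^{1.2·g·ℓ_0} and |B_{ℓ_1}| ≥ (2m−1)^{g·ℓ_1}. Let a be an integer with 1 ≤ a ≤ ℓ_0. Then there exists an integer ℓ with 0.65·ℓ_1 ≤ ℓ ≤ ℓ_1 such that |B_ℓ| ≥ (2m−1)^{g·ℓ} and |B_ℓ| ≥ (2m−1)^{g·a/2}·|B_{ℓ−a}|. -/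
open Filter Set

namespace GrowthRQ

variable {G : Type*} [Group G] {m : ℕ}

/-! Submultiplicativity of ball sizes turns `|B_{ℓ₀}| ≤ q^{1.2 g ℓ₀}` (with `q = 2m - 1`) into
`|B_ℓ| ≤ q^{1.2 g (ℓ + ℓ₀)}` for every `ℓ`. If no radius in `[0.65 ℓ₁, ℓ₁]` worked, then, stepping
down from `ℓ₁` by `a`, each step keeps `|B_ℓ| ≥ q^{g ℓ}` and gains a factor `q^{g a / 2}` beyond it;
after about `0.35 ℓ₁ / a` steps this gives `|B_ℓ| ≥ q^{g ℓ + 0.175 g ℓ₁ - O(g ℓ₀)}` at some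
`ℓ ≈ 0.65 ℓ₁`, which exceeds the upper bound since `ℓ₁ ≥ 100 ℓ₀`. -/

open Pointwise

section WordMetric

variable (gen : Fin m → G)

abbrev letter : Fin m × Bool → G := fun p => if p.2 then gen p.1 else (gen p.1)⁻¹

lemma prod_map_letter_reverse_not (w : List (Fin m × Bool)) :
    ((w.reverse.map fun p => (p.1, !p.2)).map (letter gen)).prod =
      ((w.map (letter gen)).prod)⁻¹ := by
  induction w with
  | nil => simp
  | cons p w ih =>
    obtain ⟨i, b⟩ := p
    simp only [List.map_reverse, List.map_map] at ih ⊢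
    cases b <;> simp [letter, ih]

variable {gen}

lemma exists_word_prod_eq (hgen : Subgroup.closure (Set.range gen) = ⊤) (x : G) :
    ∃ w : List (Fin m × Bool), (w.map (letter gen)).prod = x := by
  induction hgen ▸ Subgroup.mem_top x using Subgroup.closure_induction with
  | mem y hy =>
    obtain ⟨i, rfl⟩ := hy
    exact ⟨[(i, true)], by simp [letter]⟩
  | one => exact ⟨[], rfl⟩
  | mul y z _ _ hy hz =>
    obtain ⟨u, rfl⟩ := hy
    obtain ⟨v, rfl⟩ := hz
    exact ⟨u ++ v, by simp⟩
  | inv y _ hy =>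
    obtain ⟨w, rfl⟩ := hy
    exact ⟨w.reverse.map fun p => (p.1, !p.2), prod_map_letter_reverse_not gen w⟩

lemma exists_word_length_eq_wordNorm (hgen : Subgroup.closure (Set.range gen) = ⊤) (x : G) :
    ∃ w : List (Fin m × Bool), w.length = wordNorm gen x ∧ (w.map (letter gen)).prod = x := by
  obtain ⟨w, hw⟩ := exists_word_prod_eq hgen x
  exact Nat.sInf_mem (s := {n | ∃ w : List (Fin m × Bool), w.length = n ∧
    (w.map (letter gen)).prod = x}) ⟨w.length, w, rfl, hw⟩

lemma wordNorm_prod_le (w : List (Fin m × Bool)) :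
    wordNorm gen (w.map (letter gen)).prod ≤ w.length :=
  Nat.sInf_le ⟨w, rfl, rfl⟩

lemma mem_ball_natCast_iff {x : G} {n : ℕ} : x ∈ ball gen n ↔ wordNorm gen x ≤ n := by
  simp [ball]

lemma ball_mono {r r' : ℝ} (h : r ≤ r') : ball gen r ⊆ ball gen r' :=
  fun _ hx => le_trans hx h

lemma ball_zero_subset (hgen : Subgroup.closure (Set.range gen) = ⊤) : ball gen 0 ⊆ {1} := by
  intro x hx
  obtain ⟨w, hlen, rfl⟩ := exists_word_length_eq_wordNorm hgen x
  have hw : w.length ≤ 0 := hlen.trans_le (mem_ball_natCast_iff.mp (by simpa using hx))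
  simp [List.length_eq_zero_iff.mp (Nat.le_zero.mp hw)]

lemma ball_finite_s12 (hgen : Subgroup.closure (Set.range gen) = ⊤) (n : ℕ) :
    (ball gen n).Finite := by
  refine ((List.finite_length_le (Fin m × Bool) n).image
    fun w => (w.map (letter gen)).prod).subset ?_
  intro x hx
  obtain ⟨w, hlen, rfl⟩ := exists_word_length_eq_wordNorm hgen x
  exact ⟨w, hlen.trans_le (mem_ball_natCast_iff.mp hx), rfl⟩

lemma ball_add_subset_mul (hgen : Subgroup.closure (Set.range gen) = ⊤) (s t : ℕ) :
    ball gen ↑(s + t) ⊆ ball gen s * ball gen t := by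
  intro x hx
  obtain ⟨w, hlen, rfl⟩ := exists_word_length_eq_wordNorm hgen x
  have hw : w.length ≤ s + t := hlen.trans_le (mem_ball_natCast_iff.mp hx)
  refine ⟨((w.take s).map (letter gen)).prod, ?_, ((w.drop s).map (letter gen)).prod, ?_,
    (List.prod_append ..).symm.trans ?_⟩
  · exact mem_ball_natCast_iff.mpr ((wordNorm_prod_le _).trans (by simp))
  · exact mem_ball_natCast_iff.mpr ((wordNorm_prod_le _).trans (by simp; omega))
  · rw [← List.map_append, List.take_append_drop]

lemma ncard_ball_add_le (hgen : Subgroup.closure (Set.range gen) = ⊤) (s t : ℕ) :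
    (ball gen ↑(s + t)).ncard ≤ (ball gen s).ncard * (ball gen t).ncard :=
  (Set.ncard_le_ncard (ball_add_subset_mul hgen s t)
    ((ball_finite_s12 hgen s).mul (ball_finite_s12 hgen t))).trans Set.natCard_mul_le

lemma ncard_ball_mono (hgen : Subgroup.closure (Set.range gen) = ⊤) {s t : ℕ} (h : s ≤ t) :
    (ball gen s).ncard ≤ (ball gen t).ncard :=
  Set.ncard_le_ncard (ball_mono (by exact_mod_cast h)) (ball_finite_s12 hgen t)

lemma ncard_ball_mul_le_pow (hgen : Subgroup.closure (Set.range gen) = ⊤) (ℓ₀ n : ℕ) :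
    (ball gen ↑(n * ℓ₀)).ncard ≤ (ball gen ℓ₀).ncard ^ n := by
  induction n with
  | zero => simpa using Set.ncard_le_ncard (ball_zero_subset hgen) (Set.finite_singleton 1)
  | succ n ih =>
    calc (ball gen ↑((n + 1) * ℓ₀)).ncard
        ≤ (ball gen ↑(n * ℓ₀)).ncard * (ball gen ℓ₀).ncard := by
          rw [add_one_mul]; exact ncard_ball_add_le hgen _ _
      _ ≤ (ball gen ℓ₀).ncard ^ (n + 1) := by rw [pow_succ]; gcongr

lemma ncard_ball_le_rpow_add (hgen : Subgroup.closure (Set.range gen) = ⊤) {ℓ₀ : ℕ}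
    (hℓ₀ : 0 < ℓ₀) {q c : ℝ} (hq : 1 ≤ q) (hc : 0 ≤ c)
    (h0 : ((ball gen ℓ₀).ncard : ℝ) ≤ q ^ (c * ℓ₀)) (ℓ : ℕ) :
    ((ball gen ℓ).ncard : ℝ) ≤ q ^ (c * (ℓ + ℓ₀)) := by
  set n := ℓ / ℓ₀ + 1
  have hnℓ₀ : n * ℓ₀ = ℓ / ℓ₀ * ℓ₀ + ℓ₀ := add_one_mul _ _
  have hℓn : ℓ ≤ n * ℓ₀ := hnℓ₀ ▸ (Nat.lt_div_mul_add hℓ₀).le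
  have hnℓ : (n * ℓ₀ : ℝ) ≤ ℓ + ℓ₀ := by
    exact_mod_cast hnℓ₀.trans_le (by gcongr; exact Nat.div_mul_le_self ℓ ℓ₀)
  calc ((ball gen ℓ).ncard : ℝ)
      ≤ (ball gen ℓ₀).ncard ^ n := by
        exact_mod_cast (ncard_ball_mono hgen hℓn).trans (ncard_ball_mul_le_pow hgen ℓ₀ n)
    _ ≤ (q ^ (c * ℓ₀)) ^ n := by gcongr
    _ = q ^ (c * (n * ℓ₀)) := by
        rw [← Real.rpow_natCast, ← Real.rpow_mul (by linarith)]; ring_nf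
    _ ≤ q ^ (c * (ℓ + ℓ₀)) := Real.rpow_le_rpow_of_exponent_le hq (by gcongr)

end WordMetric

section Descent

variable {b : ℕ → ℝ} {q g : ℝ} {a ℓ₁ : ℕ}

lemma rpow_add_le_of_forall_lt_rpow_mul (hq : 1 ≤ q) (hg : 0 ≤ g) (h1 : q ^ (g * ℓ₁) ≤ b ℓ₁)
    {k : ℕ} (hk : k * a ≤ ℓ₁)
    (hstep : ∀ j < k, q ^ (g * ↑(ℓ₁ - j * a)) ≤ b (ℓ₁ - j * a) →
      b (ℓ₁ - j * a) < q ^ (g * a / 2) * b (ℓ₁ - j * a - a)) :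
    q ^ (g * ↑(ℓ₁ - k * a) + k * (g * a / 2)) ≤ b (ℓ₁ - k * a) := by
  induction k with
  | zero => simpa using h1
  | succ k ih =>
    have hka : k * a + a ≤ ℓ₁ := by rwa [← add_one_mul]
    have IH := ih (by omega) fun j hj => hstep j (by omega)
    have hgrow : q ^ (g * ↑(ℓ₁ - k * a)) ≤ b (ℓ₁ - k * a) :=
      (Real.rpow_le_rpow_of_exponent_le hq (le_add_of_nonneg_right (by positivity))).trans IH
    have hlt := hstep k k.lt_add_one hgrow
    have hexp : g * ↑(ℓ₁ - (k + 1) * a) + ↑(k + 1) * (g * a / 2) =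
        g * ↑(ℓ₁ - k * a) + k * (g * a / 2) - g * a / 2 := by
      rw [add_one_mul, Nat.cast_sub hka, Nat.cast_sub (by omega)]; push_cast; ring
    rw [hexp, Real.rpow_sub (by linarith), div_le_iff₀ (by positivity), add_one_mul, ← Nat.sub_sub]
    linarith

lemma exists_rpow_le_and_rpow_mul_le (hq : 1 < q) (hg : 0 < g) {ℓ₀ : ℕ} (ha1 : 1 ≤ a)
    (ha : a ≤ ℓ₀) (hℓ₁ : 100 * ℓ₀ ≤ ℓ₁) (hup : ∀ ℓ : ℕ, b ℓ ≤ q ^ (1.2 * g * (ℓ + ℓ₀)))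
    (h1 : q ^ (g * ℓ₁) ≤ b ℓ₁) :
    ∃ ℓ : ℕ, 0.65 * (ℓ₁ : ℝ) ≤ ℓ ∧ ℓ ≤ ℓ₁ ∧ q ^ (g * ℓ) ≤ b ℓ ∧
      q ^ (g * a / 2) * b (ℓ - a) ≤ b ℓ := by
  by_contra! hcon
  -- the largest `k` with `k a ≤ 0.35 ℓ₁`
  set k := 7 * ℓ₁ / (20 * a)
  have hk_le : k * (20 * a) ≤ 7 * ℓ₁ := Nat.div_mul_le_self _ _
  have hk_lt : 7 * ℓ₁ < 20 * a * (k + 1) := Nat.lt_mul_div_succ _ (by omega)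
  have hkaR : (k * a : ℝ) ≤ 0.35 * ℓ₁ := by
    have : (k * (20 * a) : ℝ) ≤ 7 * ℓ₁ := by exact_mod_cast hk_le
    linarith
  have hka_ltR : 0.35 * (ℓ₁ : ℝ) < k * a + a := by
    have : (7 * ℓ₁ : ℝ) < 20 * a * (k + 1) := by exact_mod_cast hk_lt
    linarith
  have hka : k * a ≤ ℓ₁ := by
    have : (k * a : ℝ) ≤ ℓ₁ := by linarith [(ℓ₁.cast_nonneg : (0 : ℝ) ≤ ℓ₁)]
    exact_mod_cast this
  have hdesc := rpow_add_le_of_forall_lt_rpow_mul hq.le hg.le h1 hka fun j hj hgrow => by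
    refine hcon _ ?_ (Nat.sub_le _ _) hgrow
    have : (j * a : ℝ) ≤ k * a := by gcongr
    rw [Nat.cast_sub ((Nat.mul_le_mul_right a hj.le).trans hka)]
    push_cast
    linarith
  have hexp := (Real.rpow_le_rpow_left_iff hq).mp (hdesc.trans (hup _))
  rw [Nat.cast_sub hka] at hexp
  push_cast at hexp
  have haR : (a : ℝ) ≤ ℓ₀ := by exact_mod_cast ha
  have hℓ₁R : 100 * (ℓ₀ : ℝ) ≤ ℓ₁ := by exact_mod_cast hℓ₁
  have hgap : 0 < 0.7 * (k * a) - 0.2 * ℓ₁ - 1.2 * (ℓ₀ : ℝ) := by linarith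
  nlinarith [mul_pos hg hgap]

end Descent

/-- if `|B_{ℓ₀}| ≤ (2m-1)^{1.2 g ℓ₀}` and `|B_{ℓ₁}| ≥ (2m-1)^{g ℓ₁}` with
`ℓ₁ ≥ 100 ℓ₀`, then for any `1 ≤ a ≤ ℓ₀` there exists `0.65 ℓ₁ ≤ ℓ ≤ ℓ₁` with
`|B_ℓ| ≥ (2m-1)^{g ℓ}` and `|B_ℓ| ≥ (2m-1)^{g a / 2} |B_{ℓ-a}|`. -/
theorem statement12 {G : Type*} [Group G] {m : ℕ} (hm : 2 ≤ m) (gen : Fin m → G)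
    (hgen : Subgroup.closure (Set.range gen) = ⊤)
    (g : ℝ) (hg : 0 < g)
    (ℓ₀ ℓ₁ : ℕ) (hℓ₀ : 1 ≤ ℓ₀) (hℓ₁ : 100 * ℓ₀ ≤ ℓ₁)
    (h0 : ((ball gen ℓ₀).ncard : ℝ) ≤ (2 * (m : ℝ) - 1) ^ (1.2 * g * ℓ₀))
    (h1 : ((ball gen ℓ₁).ncard : ℝ) ≥ (2 * (m : ℝ) - 1) ^ (g * ℓ₁))
    (a : ℕ) (ha1 : 1 ≤ a) (ha : a ≤ ℓ₀) :
    ∃ ℓ : ℕ, 0.65 * (ℓ₁ : ℝ) ≤ (ℓ : ℝ) ∧ ℓ ≤ ℓ₁ ∧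
      ((ball gen ℓ).ncard : ℝ) ≥ (2 * (m : ℝ) - 1) ^ (g * ℓ) ∧
      ((ball gen ℓ).ncard : ℝ) ≥
        (2 * (m : ℝ) - 1) ^ (g * a / 2) * ((ball gen ((ℓ : ℝ) - a)).ncard : ℝ) := by
  have hq : 1 < 2 * (m : ℝ) - 1 := by
    have : (2 : ℝ) ≤ m := by exact_mod_cast hm
    linarith
  obtain ⟨ℓ, hlo, hhi, hgrow, hratio⟩ :=
    exists_rpow_le_and_rpow_mul_le (b := fun ℓ => ((ball gen ℓ).ncard : ℝ)) hq hg ha1 ha hℓ₁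
      (ncard_ball_le_rpow_add hgen hℓ₀ hq.le (by positivity) h0) h1
  have haℓ : a ≤ ℓ := by
    have : (a : ℝ) ≤ ℓ₀ := by exact_mod_cast ha
    have : 100 * (ℓ₀ : ℝ) ≤ ℓ₁ := by exact_mod_cast hℓ₁
    exact_mod_cast (show (a : ℝ) ≤ ℓ by linarith)
  refine ⟨ℓ, hlo, hhi, hgrow, ?_⟩
  rwa [← Nat.cast_sub haℓ]

end GrowthRQ
end
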